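/- In a graded connected unital shuffle algebra, the left half-shuffle logarithm log^≺(1 + Y) := Y ≺ (Σ_{n≥0} (−1)^n Y^{⧢n}) is a two-sided inverse of the left half-shuffle exponential: log^≺(exp^≺(a)) = a for all a of positive degree, and exp^≺(log^≺(1 + Y)) = 1 + Y for all Y of positive degree. -/

import Mathlib

/-- A shuffle (dendriform) algebra over a field `k`: a `k`-vector space `D` with two
bilinear half-shuffle products `≺` (`prec`) and `≻` (`succ`) satisfying
`(a ≺ b) ≺ c = a ≺ (b ⧢ c)`, `(a ≻ b) ≺ c = a ≻ (b ≺ c)`, `a ≻ (b ≻ c) = (a ⧢ b) ≻ c`,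
where `a ⧢ b := a ≺ b + a ≻ b`. -/
class ShuffleAlgebra (k : Type*) (D : Type*) [Field k] [AddCommGroup D] [Module k D] where
  prec : D →ₗ[k] D →ₗ[k] D
  succ : D →ₗ[k] D →ₗ[k] D
  prec_prec : ∀ a b c : D, prec (prec a b) c = prec a (prec b c + succ b c)
  succ_prec : ∀ a b c : D, prec (succ a b) c = succ a (prec b c)
  succ_succ : ∀ a b c : D, succ a (succ b c) = succ (prec a b + succ a b) c

variable (k : Type*) {D : Type*} [Field k] [AddCommGroup D] [Module k D] [ShuffleAlgebra k D]

/-- The left half-shuffle product `a ≺ b`. -/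
def hsPrec (a b : D) : D := ShuffleAlgebra.prec (k := k) a b

/-- The right half-shuffle product `a ≻ b`. -/
def hsSucc (a b : D) : D := ShuffleAlgebra.succ (k := k) a b

/-- The shuffle product `a ⧢ b := a ≺ b + a ≻ b`. -/
def hsShuffle (a b : D) : D := hsPrec k a b + hsSucc k a b

/-!
Formal-series model of a graded connected unital shuffle algebra (cf. the paper, which
works "with formal series expansions ... insuring convergence in the formal sense"):
the positive-degree part is the space `ℕ → D` of formal series
`x = Σ_{n ≥ 0} xₙ t^{n+1}` with coefficients in a shuffle algebra `D` (the coefficient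
`x n` sits in degree `n + 1`, so there is no degree-zero component), and the unital
augmentation is `k × (ℕ → D) = k·1 ⊕ (ℕ → D)`, with the unit conventions
`a ≺ 1 = a = 1 ≻ a`, `1 ≺ a = 0 = a ≻ 1`, `1 ⧢ 1 = 1`.
All infinite sums are finite in each degree.
-/

/-- `≺` on positive-degree formal series. -/
def cprec (x y : ℕ → D) : ℕ → D := fun n =>
  match n with
  | 0 => 0
  | n + 1 => ∑ p ∈ Finset.HasAntidiagonal.antidiagonal n, hsPrec k (x p.1) (y p.2)

/-- `≻` on positive-degree formal series. -/
def csucc (x y : ℕ → D) : ℕ → D := fun n =>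
  match n with
  | 0 => 0
  | n + 1 => ∑ p ∈ Finset.HasAntidiagonal.antidiagonal n, hsSucc k (x p.1) (y p.2)

/-- `⧢` on positive-degree formal series. -/
def csh (x y : ℕ → D) : ℕ → D := cprec k x y + csucc k x y

/-- The unit `1` of the unital augmentation `k·1 ⊕ (ℕ → D)`. -/
def uone : k × (ℕ → D) := (1, 0)

/-- The inclusion of the positive-degree part into the unital augmentation. -/
def uinj (a : ℕ → D) : k × (ℕ → D) := (0, a)

/-- The shuffle product `⧢` on the unital augmentation (using `1 ⧢ X = X = X ⧢ 1`). -/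
def ush (X Y : k × (ℕ → D)) : k × (ℕ → D) :=
  (X.1 * Y.1, X.1 • Y.2 + Y.1 • X.2 + csh k X.2 Y.2)

/-- `a ≺ X` for `a` of positive degree and `X` in the unital augmentation
(using `a ≺ 1 = a`). -/
def uprec (a : ℕ → D) (X : k × (ℕ → D)) : ℕ → D := X.1 • a + cprec k a X.2

/-- `X ≻ a` for `a` of positive degree and `X` in the unital augmentation
(using `1 ≻ a = a`). -/
def usucc (X : k × (ℕ → D)) (a : ℕ → D) : ℕ → D := X.1 • a + csucc k X.2 a

/-- `a^{≺(m+1)}`, i.e. `precPow k a m = a^{≺(m+1)}` (and `a^{≺0} = 1`). -/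
def precPow (a : ℕ → D) : ℕ → (ℕ → D)
  | 0 => a
  | m + 1 => cprec k a (precPow a m)

/-- `a^{≻(m+1)}`. -/
def succPow (a : ℕ → D) : ℕ → (ℕ → D)
  | 0 => a
  | m + 1 => csucc k (succPow a m) a

/-- `a^{⧢(m+1)}`. -/
def shPow (a : ℕ → D) : ℕ → (ℕ → D)
  | 0 => a
  | m + 1 => csh k a (shPow a m)

/-- The left half-shuffle exponential `exp^≺(a) = 1 + Σ_{n>0} a^{≺n}`
(the sum is finite in each degree). -/
def expPrec (a : ℕ → D) : k × (ℕ → D) :=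
  (1, fun n => ∑ m ∈ Finset.range (n + 1), precPow k a m n)

/-- The right half-shuffle exponential `exp^≻(a) = 1 + Σ_{n>0} a^{≻n}`. -/
def expSucc (a : ℕ → D) : k × (ℕ → D) :=
  (1, fun n => ∑ m ∈ Finset.range (n + 1), succPow k a m n)

/-- The shuffle exponential `exp^⧢(a) = 1 + Σ_{n>0} a^{⧢n}/n!`. -/
noncomputable def expSh (a : ℕ → D) : k × (ℕ → D) :=
  (1, fun n => ∑ m ∈ Finset.range (n + 1), (((m + 1).factorial : k))⁻¹ • shPow k a m n)

/-- `Σ_{n ≥ 0} (−1)^n Y^{⧢n} = 1 + Σ_{m ≥ 0} (−1)^{m+1} Y^{⧢(m+1)}`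
(the shuffle-geometric series; finite in each degree). -/
def geomSh (Y : ℕ → D) : k × (ℕ → D) :=
  (1, fun n => ∑ m ∈ Finset.range (n + 1), ((-1 : k) ^ (m + 1)) • shPow k Y m n)

/-- The left half-shuffle logarithm `log^≺(1 + Y) := Y ≺ (Σ_{n≥0} (−1)^n Y^{⧢n})`. -/
def logPrec (Y : ℕ → D) : ℕ → D := uprec k Y (geomSh k Y)


/-!
The axiom `(a ≺ b) ≺ c = a ≺ (b ⧢ c)` extends to the augmentation as `a ≺ X ≺ Y = a ≺ (X ⧢ Y)`,
and `G = Σ (-1)ⁿ Y^{⧢n}` is a two-sided `⧢`-inverse of `1 + Y`. Since `E = exp^≺(a) - 1` solves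
`E = a ≺ (1 + E)`, we get `log^≺(exp^≺ a) = (a ≺ (1 + E)) ≺ G(E) = a ≺ ((1 + E) ⧢ G(E)) = a`.
Conversely `b = log^≺(1 + Y)` satisfies `b ≺ (1 + Y) = Y ≺ (G(Y) ⧢ (1 + Y)) = Y`, so `Y` and
`exp^≺(b) - 1` both solve `X = b + b ≺ X`, whose solution is unique because `X ↦ b ≺ X` is
strictly causal: its degree-`n` part depends only on the parts of `X` of degree `< n`. Both
series are Neumann series `Σ Lᵐ a` of strictly causal operators `L`.
-/

open Finset

theorem Finset.Nat.sum_antidiagonal_antidiagonal {M : Type*} [AddCommMonoid M]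
    (f : ℕ → ℕ → ℕ → M) (n : ℕ) :
    ∑ p ∈ antidiagonal n, ∑ q ∈ antidiagonal p.1, f q.1 q.2 p.2
      = ∑ p ∈ antidiagonal n, ∑ q ∈ antidiagonal p.2, f p.1 q.1 q.2 := by
  rw [sum_sigma', sum_sigma']
  refine sum_nbij' (fun x => ⟨(x.2.1, x.2.2 + x.1.2), (x.2.2, x.1.2)⟩)
    (fun x => ⟨(x.1.1 + x.2.1, x.2.2), (x.1.1, x.2.1)⟩) ?_ ?_ ?_ ?_ fun _ _ => rfl <;>
  rintro ⟨⟨p₁, p₂⟩, ⟨q₁, q₂⟩⟩ hx <;>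
  simp only [mem_sigma, HasAntidiagonal.mem_antidiagonal, Sigma.mk.injEq, Prod.mk.injEq,
    heq_eq_eq, and_true, true_and] at hx ⊢ <;>
  omega

section NeumannSeries

variable {R M : Type*} [Semiring R] [AddCommMonoid M] [Module R M]

def StrictlyCausal (L : Module.End R (ℕ → M)) : Prop :=
  ∀ x y n, (∀ j < n, x j = y j) → L x n = L y n

/-- `Σₘ Lᵐ a`; for strictly causal `L` the terms with `m > n` vanish in degree `n`. -/
def neumannSeries (L : Module.End R (ℕ → M)) (a : ℕ → M) : ℕ → M :=
  fun n => ∑ m ∈ range (n + 1), (L ^ m) a n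

namespace StrictlyCausal

variable {L : Module.End R (ℕ → M)} (hL : StrictlyCausal L) (a : ℕ → M)
include hL

lemma pow_apply_of_lt {m n : ℕ} (h : n < m) : (L ^ m) a n = 0 := by
  induction m generalizing n with
  | zero => omega
  | succ m ih =>
    rw [pow_succ', Module.End.mul_apply, hL _ 0 n fun j hj => ih (by omega), map_zero,
      Pi.zero_apply]

lemma neumannSeries_apply_of_lt {j N : ℕ} (h : j < N) :
    neumannSeries L a j = ∑ m ∈ range N, (L ^ m) a j := by
  refine sum_subset (range_subset_range.mpr (by omega)) fun m _ hm => ?_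
  exact hL.pow_apply_of_lt a (by simpa using hm)

lemma neumannSeries_eq_add : neumannSeries L a = a + L (neumannSeries L a) := by
  funext n
  have hL_sum : L (neumannSeries L a) n = ∑ m ∈ range n, (L ^ (m + 1)) a n := by
    rw [hL _ (∑ m ∈ range n, (L ^ m) a) n fun j hj => by
      rw [hL.neumannSeries_apply_of_lt a hj, Finset.sum_apply]]
    simp only [map_sum, Finset.sum_apply, pow_succ', Module.End.mul_apply]
  rw [Pi.add_apply, hL_sum, neumannSeries, sum_range_succ', pow_zero, Module.End.one_apply,
    add_comm]

lemma eq_of_eq_add {x y : ℕ → M} (hx : x = a + L x) (hy : y = a + L y) : x = y := by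
  funext n
  induction n using Nat.strong_induction_on with
  | _ n ih => rw [hx, hy, Pi.add_apply, Pi.add_apply, hL x y n ih]

end StrictlyCausal

lemma StrictlyCausal.neg {R M : Type*} [Ring R] [AddCommGroup M] [Module R M]
    {L : Module.End R (ℕ → M)} (hL : StrictlyCausal L) : StrictlyCausal (-L) :=
  fun x y n h => by simp only [LinearMap.neg_apply, Pi.neg_apply, hL x y n h]

end NeumannSeries

section ShiftConv

variable {R M : Type*} [CommSemiring R] [AddCommMonoid M] [Module R M]

/-- Product of series whose `n`-th coefficient sits in degree `n + 1`: the coefficient of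
degree `n + 2` collects the products of coefficients of degrees `i + 1`, `j + 1`
with `i + j = n`. -/
def shiftConv (f : M →ₗ[R] M →ₗ[R] M) : (ℕ → M) →ₗ[R] (ℕ → M) →ₗ[R] (ℕ → M) :=
  LinearMap.mk₂ R
    (fun x y n => match n with
      | 0 => 0
      | n + 1 => ∑ p ∈ antidiagonal n, f (x p.1) (y p.2))
    (fun _ _ _ => by funext n; cases n <;> simp [sum_add_distrib])
    (fun _ _ _ => by funext n; cases n <;> simp [smul_sum])
    (fun _ _ _ => by funext n; cases n <;> simp [sum_add_distrib])
    (fun _ _ _ => by funext n; cases n <;> simp [smul_sum])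

variable (f g : M →ₗ[R] M →ₗ[R] M) (x y z : ℕ → M)

@[simp]
lemma shiftConv_apply_zero : shiftConv f x y 0 = 0 := rfl

lemma shiftConv_apply_succ (n : ℕ) :
    shiftConv f x y (n + 1) = ∑ p ∈ antidiagonal n, f (x p.1) (y p.2) := rfl

lemma shiftConv_add : shiftConv (f + g) x y = shiftConv f x y + shiftConv g x y := by
  funext n
  cases n <;> simp [shiftConv_apply_succ, sum_add_distrib]

lemma shiftConv_shiftConv (h i : M →ₗ[R] M →ₗ[R] M)
    (hassoc : ∀ a b c, f (g a b) c = h a (i b c)) :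
    shiftConv f (shiftConv g x y) z = shiftConv h x (shiftConv i y z) := by
  funext n
  rcases n with _ | _ | n
  · rfl
  · simp [shiftConv_apply_succ]
  · rw [shiftConv_apply_succ, shiftConv_apply_succ, Nat.sum_antidiagonal_succ,
      Nat.sum_antidiagonal_succ']
    simp only [shiftConv_apply_zero, map_zero, LinearMap.zero_apply, zero_add,
      shiftConv_apply_succ, map_sum, LinearMap.sum_apply, hassoc]
    exact Nat.sum_antidiagonal_antidiagonal (fun r s t => h (x r) (i (y s) (z t))) n

lemma strictlyCausal_shiftConv (x : ℕ → M) : StrictlyCausal (shiftConv f x) := by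
  rintro y y' (_ | n) h
  · rfl
  · rw [shiftConv_apply_succ, shiftConv_apply_succ]
    exact sum_congr rfl fun p hp => by
      rw [h p.2 (by have := HasAntidiagonal.mem_antidiagonal.mp hp; omega)]

lemma strictlyCausal_shiftConv_flip (y : ℕ → M) : StrictlyCausal ((shiftConv f).flip y) := by
  rintro x x' (_ | n) h
  · rfl
  · rw [LinearMap.flip_apply, LinearMap.flip_apply, shiftConv_apply_succ, shiftConv_apply_succ]
    exact sum_congr rfl fun p hp => by
      rw [h p.1 (by have := HasAntidiagonal.mem_antidiagonal.mp hp; omega)]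

end ShiftConv

section ShuffleSeries

def shuffleBilin : D →ₗ[k] D →ₗ[k] D := ShuffleAlgebra.prec + ShuffleAlgebra.succ

lemma hsShuffle_assoc (a b c : D) :
    hsShuffle k (hsShuffle k a b) c = hsShuffle k a (hsShuffle k b c) := by
  simp only [hsShuffle, hsPrec, hsSucc, map_add, LinearMap.add_apply, ShuffleAlgebra.prec_prec,
    ShuffleAlgebra.succ_prec, ShuffleAlgebra.succ_succ]
  abel

lemma cprec_eq_shiftConv (x y : ℕ → D) :
    cprec k x y = shiftConv (ShuffleAlgebra.prec (k := k)) x y := by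
  funext n
  cases n <;> rfl

lemma csh_eq_shiftConv (x y : ℕ → D) : csh k x y = shiftConv (shuffleBilin k) x y := by
  rw [shuffleBilin, shiftConv_add]
  funext n
  cases n <;> rfl

lemma cprec_cprec (a b c : ℕ → D) : cprec k (cprec k a b) c = cprec k a (csh k b c) := by
  simp only [cprec_eq_shiftConv, csh_eq_shiftConv]
  exact shiftConv_shiftConv _ _ _ _ _ _ _ ShuffleAlgebra.prec_prec

lemma csh_assoc (a b c : ℕ → D) : csh k (csh k a b) c = csh k a (csh k b c) := by
  simp only [csh_eq_shiftConv]
  exact shiftConv_shiftConv _ _ _ _ _ _ _ (hsShuffle_assoc k)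

lemma shPow_succ' (Y : ℕ → D) (m : ℕ) : shPow k Y (m + 1) = csh k (shPow k Y m) Y := by
  induction m with
  | zero => rfl
  | succ m ih =>
    change csh k Y (shPow k Y (m + 1)) = csh k (csh k Y (shPow k Y m)) Y
    rw [ih, csh_assoc]

lemma precPow_eq_pow (a : ℕ → D) (m : ℕ) :
    precPow k a m = (shiftConv (ShuffleAlgebra.prec (k := k)) a ^ m) a := by
  induction m with
  | zero => rfl
  | succ m ih => rw [precPow, pow_succ', Module.End.mul_apply, ← ih, cprec_eq_shiftConv]

lemma shPow_eq_pow (Y : ℕ → D) (m : ℕ) :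
    shPow k Y m = (shiftConv (shuffleBilin k) Y ^ m) Y := by
  induction m with
  | zero => rfl
  | succ m ih => rw [shPow, pow_succ', Module.End.mul_apply, ← ih, csh_eq_shiftConv]

lemma shPow_eq_pow_flip (Y : ℕ → D) (m : ℕ) :
    shPow k Y m = ((shiftConv (shuffleBilin k)).flip Y ^ m) Y := by
  induction m with
  | zero => rfl
  | succ m ih =>
    rw [shPow_succ', pow_succ', Module.End.mul_apply, ← ih, csh_eq_shiftConv, LinearMap.flip_apply]

end ShuffleSeries

section Unital

lemma geomSh_fst (Y : ℕ → D) : (geomSh k Y).1 = 1 := rfl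

lemma geomSh_snd_eq_neumannSeries (Y : ℕ → D) (L : Module.End k (ℕ → D))
    (hL : ∀ m, (L ^ m) Y = shPow k Y m) :
    (geomSh k Y).2 = neumannSeries (-L) (-Y) := by
  have hpow : ∀ m, ((-L) ^ m) (-Y) = (-1 : k) ^ (m + 1) • shPow k Y m := by
    intro m
    induction m with
    | zero => simp only [pow_zero, zero_add, pow_one, Module.End.one_apply, neg_one_smul]; rfl
    | succ m ih =>
      rw [pow_succ', Module.End.mul_apply, ih, ← hL, ← hL, pow_succ' L, Module.End.mul_apply]
      simp [pow_succ]
  funext n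
  simp only [geomSh, neumannSeries, hpow, Pi.smul_apply]

lemma ush_one_add_geomSh (Y : ℕ → D) : ush k (uone k + uinj k Y) (geomSh k Y) = uone k := by
  have hG := (strictlyCausal_shiftConv (shuffleBilin k) Y).neg.neumannSeries_eq_add (-Y)
  rw [← geomSh_snd_eq_neumannSeries k Y _ (fun m => (shPow_eq_pow k Y m).symm),
    LinearMap.neg_apply, ← csh_eq_shiftConv] at hG
  refine Prod.ext ?_ ?_ <;>
  simp only [ush, uone, uinj, geomSh_fst, Prod.mk_add_mk, add_zero, zero_add, one_smul, one_mul]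
  nth_rewrite 1 [hG]
  abel

lemma ush_geomSh_one_add (Y : ℕ → D) : ush k (geomSh k Y) (uone k + uinj k Y) = uone k := by
  have hG := (strictlyCausal_shiftConv_flip (shuffleBilin k) Y).neg.neumannSeries_eq_add (-Y)
  rw [← geomSh_snd_eq_neumannSeries k Y _ (fun m => (shPow_eq_pow_flip k Y m).symm),
    LinearMap.neg_apply, LinearMap.flip_apply, ← csh_eq_shiftConv] at hG
  refine Prod.ext ?_ ?_ <;>
  simp only [ush, uone, uinj, geomSh_fst, Prod.mk_add_mk, add_zero, zero_add, one_smul, one_mul]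
  nth_rewrite 1 [hG]
  abel

lemma uprec_uprec (a : ℕ → D) (X Y : k × (ℕ → D)) :
    uprec k (uprec k a X) Y = uprec k a (ush k X Y) := by
  have hassoc := cprec_cprec k a X.2 Y.2
  simp only [cprec_eq_shiftConv] at hassoc
  simp only [uprec, ush, cprec_eq_shiftConv, map_add, map_smul, LinearMap.add_apply,
    LinearMap.smul_apply, hassoc, smul_add, smul_smul, mul_comm Y.1 X.1]
  abel

lemma uprec_uone (a : ℕ → D) : uprec k a (uone k) = a := by
  simp [uprec, uone, cprec_eq_shiftConv]

lemma uprec_one_add_uinj (a x : ℕ → D) : uprec k a (uone k + uinj k x) = a + cprec k a x := by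
  simp [uprec, uone, uinj]

lemma expPrec_eq_one_add_uinj (a : ℕ → D) : expPrec k a = uone k + uinj k (expPrec k a).2 := by
  simp [expPrec, uone, uinj]

lemma expPrec_snd_eq_add_cprec (a : ℕ → D) :
    (expPrec k a).2 = a + cprec k a (expPrec k a).2 := by
  have hE : (expPrec k a).2 = neumannSeries (shiftConv (ShuffleAlgebra.prec (k := k)) a) a := by
    funext n
    simp only [expPrec, neumannSeries, precPow_eq_pow]
  rw [cprec_eq_shiftConv, hE]
  exact (strictlyCausal_shiftConv _ a).neumannSeries_eq_add a

lemma eq_of_eq_add_cprec {a x y : ℕ → D} (hx : x = a + cprec k a x) (hy : y = a + cprec k a y) :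
    x = y := by
  rw [cprec_eq_shiftConv] at hx hy
  exact (strictlyCausal_shiftConv _ a).eq_of_eq_add a hx hy

end Unital

/-- in a graded connected unital shuffle algebra, the left half-shuffle
logarithm is a two-sided inverse of the left half-shuffle exponential:
`log^≺(exp^≺(a)) = a` and `exp^≺(log^≺(1 + Y)) = 1 + Y` for all `a`, `Y` of
positive degree. -/
theorem logPrec_inverse_expPrec :
    (∀ a : ℕ → D, logPrec k ((expPrec k a).2) = a) ∧
      (∀ Y : ℕ → D, expPrec k (logPrec k Y) = uone k + uinj k Y) := by
  refine ⟨fun a => ?_, fun Y => ?_⟩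
  · set E := (expPrec k a).2
    have hE : E = uprec k a (uone k + uinj k E) := by
      rw [uprec_one_add_uinj]
      exact expPrec_snd_eq_add_cprec k a
    calc logPrec k E = uprec k (uprec k a (uone k + uinj k E)) (geomSh k E) := by rw [← hE]; rfl
      _ = uprec k a (ush k (uone k + uinj k E) (geomSh k E)) := uprec_uprec k _ _ _
      _ = a := by rw [ush_one_add_geomSh, uprec_uone]
  · have hY : Y = logPrec k Y + cprec k (logPrec k Y) Y := by
      rw [← uprec_one_add_uinj, logPrec, uprec_uprec, ush_geomSh_one_add, uprec_uone]
    rw [expPrec_eq_one_add_uinj,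
      eq_of_eq_add_cprec k (expPrec_snd_eq_add_cprec k (logPrec k Y)) hY]
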